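/- arXiv:1701.06259 — 5 statements merged into one kernel-verified Lean document; each statement's English description precedes it below -/
import Mathlib

section
/- Let a, c be positive real numbers and τ a nonzero complex number. Then for every z ∈ ℂ, a·(Re(τ·z))² + c·(Im(τ·z))² = t·|z|² + Re(conj(w)·z²), where t = |τ|²·(a+c)/2 and w = conj(τ)²·(a−c)/2; moreover t > 0 and w/t = (conj(τ)/τ)·(a−c)/(a+c). In particular, the conformal class of the pull-back m_τ* q_{a,c}, in Klein coordinates, equals (conj(τ)/τ)·(a−c)/(a+c). -/
/-! Writing `u = x + iy`, one has `a x² + c y² = (a+c)/2 · |u|² + (a-c)/2 · Re(u²)`.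
Substituting `u = τ z` gives `|u|² = |τ|²|z|²` and `Re(u²) = Re(conj(conj(τ)²) z²)`, which is the
claimed decomposition. The Klein ratio follows from `conj(τ)² / |τ|² = conj(τ) / τ`, since
`|τ|² = τ conj(τ)`. -/

open ComplexConjugate

namespace Complex

theorem mul_re_sq_add_mul_im_sq (a c : ℝ) (u : ℂ) :
    a * u.re ^ 2 + c * u.im ^ 2 = (a + c) / 2 * ‖u‖ ^ 2 + (a - c) / 2 * (u ^ 2).re := by
  rw [Complex.sq_norm, normSq_apply, sq u, mul_re]
  ring

theorem re_conj_conj_sq_mul_ofReal_mul (τ z : ℂ) (r : ℝ) :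
    (conj (conj τ ^ 2 * r) * z ^ 2).re = r * ((τ * z) ^ 2).re := by
  rw [map_mul, map_pow, conj_conj, conj_ofReal, mul_pow, mul_comm _ (r : ℂ), mul_assoc,
    re_ofReal_mul]

theorem conj_sq_div_sq_norm {τ : ℂ} (hτ : τ ≠ 0) :
    conj τ ^ 2 / ((‖τ‖ ^ 2 : ℝ) : ℂ) = conj τ / τ := by
  rw [ofReal_pow, ← mul_conj', sq, mul_div_mul_right _ _ ((map_ne_zero _).mpr hτ)]

end Complex

/-- For positive `a, c` and nonzero `τ`, the pull-back `m_τ* q_{a,c}` has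
`(ℝ ⊕ ℂ)`-coordinates `t = |τ|²·(a+c)/2`, `w = conj(τ)²·(a−c)/2`, and its
conformal class in Klein coordinates equals `(conj(τ)/τ)·(a−c)/(a+c)`. -/
theorem klein_class_of_diagonal_pullback (a c : ℝ) (ha : 0 < a) (hc : 0 < c)
    (τ : ℂ) (hτ : τ ≠ 0) (t : ℝ) (w : ℂ)
    (ht : t = ‖τ‖ ^ 2 * ((a + c) / 2))
    (hw : w = ((starRingEnd ℂ) τ) ^ 2 * (((a - c) / 2 : ℝ) : ℂ)) :
    (∀ z : ℂ, a * (τ * z).re ^ 2 + c * (τ * z).im ^ 2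
        = t * ‖z‖ ^ 2 + ((starRingEnd ℂ) w * z ^ 2).re) ∧
    0 < t ∧
    w / (t : ℂ) = ((starRingEnd ℂ) τ / τ) * (((a - c) / (a + c) : ℝ) : ℂ) := by
  subst ht hw
  refine ⟨fun z => ?_, by positivity, ?_⟩
  · rw [Complex.mul_re_sq_add_mul_im_sq, Complex.re_conj_conj_sq_mul_ofReal_mul, norm_mul, mul_pow]
    ring
  · rw [Complex.ofReal_mul, mul_div_mul_comm, Complex.conj_sq_div_sq_norm hτ,
      ← Complex.ofReal_div, div_div_div_cancel_right₀ two_ne_zero]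
end

section
/- Let τ be a nonzero complex number and q : ℂ → ℝ a positive definite real quadratic form. Suppose t, t' ∈ ℝ and w, w' ∈ ℂ satisfy q(z) = t·|z|² + Re(conj(w)·z²) and q(τ·z) = t'·|z|² + Re(conj(w')·z²) for all z ∈ ℂ. Then Ω(w'/t') = (conj(τ)/τ)·Ω(w/t); that is, the Poincaré invariant satisfies P(m_τ* q) = (conj(τ)/τ)·P(q). -/
/-!
The coefficients `(t, w)` of `z ↦ t‖z‖² + Re(conj w · z²)` are determined by the function
(evaluate at `1`, `i`, `1 + i`), and substituting `τ z` turns `(t, w)` into `(t‖τ‖², w · conj τ²)`.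
Hence `w' / t' = (conj τ / τ) · (w / t)`, and `Ω` commutes with multiplication by the unimodular
number `conj τ / τ` because it sees its argument only through `‖μ‖` in the denominator.
-/

/-- The standard isomorphism from the Klein model to the Poincaré model of the
hyperbolic plane on the open unit disc: `Ω(μ) = μ / (1 + √(1 − |μ|²))`. -/
noncomputable def Omega (μ : ℂ) : ℂ :=
  μ / ((1 : ℂ) + (Real.sqrt (1 - ‖μ‖ ^ 2) : ℂ))

open ComplexConjugate

noncomputable def quadForm (t : ℝ) (w : ℂ) (z : ℂ) : ℝ := t * ‖z‖ ^ 2 + (conj w * z ^ 2).re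

theorem quadForm_injective {t s : ℝ} {w v : ℂ} (h : quadForm t w = quadForm s v) :
    t = s ∧ w = v := by
  have h_one := congrFun h 1
  have h_I := congrFun h Complex.I
  have h_one_add_I := congrFun h (1 + Complex.I)
  simp only [quadForm, norm_one, mul_one, Complex.conj_re, Complex.norm_I, sq,
    Complex.I_mul_I, mul_neg, Complex.neg_re, Complex.mul_re, Complex.add_re, Complex.one_re,
    Complex.I_re, add_zero, Complex.add_im, Complex.one_im, Complex.I_im, zero_add, sub_self,
    mul_zero, Complex.conj_im, Complex.mul_im, neg_mul, sub_neg_eq_add] at h_one h_I h_one_add_I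
  have hts : t = s := by linarith
  refine ⟨hts, Complex.ext (by linarith) ?_⟩
  subst hts
  linarith

theorem quadForm_comp_mul (t : ℝ) (w τ : ℂ) :
    (fun z => quadForm t w (τ * z)) = quadForm (t * ‖τ‖ ^ 2) (w * conj τ ^ 2) := by
  ext z
  simp only [quadForm, norm_mul, map_mul, map_pow, Complex.conj_conj]
  ring_nf

theorem Omega_mul_of_norm_eq_one {c : ℂ} (hc : ‖c‖ = 1) (μ : ℂ) :
    Omega (c * μ) = c * Omega μ := by
  rw [Omega, Omega, norm_mul, hc, one_mul, mul_div_assoc]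

theorem norm_conj_div_self (τ : ℂ) (hτ : τ ≠ 0) : ‖conj τ / τ‖ = 1 := by
  rw [norm_div, Complex.norm_conj, div_self (norm_ne_zero_iff.mpr hτ)]

theorem div_ofReal_mul_norm_sq {τ : ℂ} (hτ : τ ≠ 0) (t : ℝ) (w : ℂ) :
    w * conj τ ^ 2 / ((t * ‖τ‖ ^ 2 : ℝ) : ℂ) = conj τ / τ * (w / t) := by
  have hconj : conj τ ≠ 0 := (map_ne_zero _).mpr hτ
  push_cast
  rw [← Complex.mul_conj']
  calc w * conj τ ^ 2 / (t * (τ * conj τ))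
      = (w * conj τ) * conj τ / ((t * τ) * conj τ) := by ring_nf
    _ = w * conj τ / (t * τ) := mul_div_mul_right _ _ hconj
    _ = conj τ / τ * (w / t) := by rw [div_mul_div_comm, mul_comm (conj τ), mul_comm τ]

theorem poincare_invariant_of_pullback_general (q : ℂ → ℝ)
    (τ : ℂ) (hτ : τ ≠ 0) (t t' : ℝ) (w w' : ℂ)
    (h1 : ∀ z : ℂ, q z = t * ‖z‖ ^ 2 + ((starRingEnd ℂ) w * z ^ 2).re)
    (h2 : ∀ z : ℂ, q (τ * z) = t' * ‖z‖ ^ 2 + ((starRingEnd ℂ) w' * z ^ 2).re) :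
    Omega (w' / (t' : ℂ)) = ((starRingEnd ℂ) τ / τ) * Omega (w / (t : ℂ)) := by
  have hq_eq : q = quadForm t w := funext h1
  obtain ⟨rfl, rfl⟩ : t * ‖τ‖ ^ 2 = t' ∧ w * conj τ ^ 2 = w' := by
    refine quadForm_injective ?_
    rw [← quadForm_comp_mul, ← hq_eq]
    exact funext h2
  rw [div_ofReal_mul_norm_sq hτ, Omega_mul_of_norm_eq_one (norm_conj_div_self τ hτ)]

/-- The Poincaré invariant satisfies `P(m_τ* q) = (conj(τ)/τ)·P(q)` for every positive
definite quadratic form `q` on ℂ and every nonzero `τ`. -/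
theorem poincare_invariant_of_pullback (q : ℂ → ℝ) (B : ℂ →ₗ[ℝ] ℂ →ₗ[ℝ] ℝ)
    (hB : ∀ x y : ℂ, B x y = B y x) (hq : ∀ z : ℂ, q z = B z z)
    (hpos : ∀ z : ℂ, z ≠ 0 → 0 < q z)
    (τ : ℂ) (hτ : τ ≠ 0) (t t' : ℝ) (w w' : ℂ)
    (h1 : ∀ z : ℂ, q z = t * ‖z‖ ^ 2 + ((starRingEnd ℂ) w * z ^ 2).re)
    (h2 : ∀ z : ℂ, q (τ * z) = t' * ‖z‖ ^ 2 + ((starRingEnd ℂ) w' * z ^ 2).re) :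
    Omega (w' / (t' : ℂ)) = ((starRingEnd ℂ) τ / τ) * Omega (w / (t : ℂ)) :=
  poincare_invariant_of_pullback_general q τ hτ t t' w w' h1 h2
end

section
/- Let T : ℂ → ℂ be a real-linear map with positive determinant. Then |T_z̄| < |T_z| (in particular |μ_T| < 1), for every z ∈ ℂ one has ‖T(z)‖² = t·|z|² + Re(conj(w)·z²) with t = |T_z|² + |T_z̄|² and w = 2·conj(T_z)·T_z̄, and moreover Ω(w/t) = μ_T. That is, the Poincaré conformal dilatation of T — the image under the Klein-to-Poincaré isomorphism Ω of the Klein invariant of the pull-back form T* n, n(z) = |z|² — equals the classical complex dilatation μ_T = T_z̄/T_z. -/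
open Complex ComplexConjugate

noncomputable def wirtingerZ (T : ℂ →ₗ[ℝ] ℂ) : ℂ := (T 1 - I * T I) / 2

noncomputable def wirtingerZBar (T : ℂ →ₗ[ℝ] ℂ) : ℂ := (T 1 + I * T I) / 2

theorem apply_eq_wirtingerZ_mul_add (T : ℂ →ₗ[ℝ] ℂ) (z : ℂ) :
    T z = wirtingerZ T * z + wirtingerZBar T * conj z := by
  obtain ⟨x, y, rfl⟩ : ∃ x y : ℝ, z = x + y * I := ⟨z.re, z.im, (re_add_im z).symm⟩
  have hT : T (x + y * I) = x * T 1 + y * T I := by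
    have := T.map_add (x • 1) (y • I)
    rwa [map_smul, map_smul, real_smul, real_smul, real_smul, real_smul, mul_one] at this
  rw [hT, wirtingerZ, wirtingerZBar, map_add, map_mul, conj_ofReal, conj_ofReal, conj_I]
  linear_combination ((y : ℂ) * T I) * I_sq

theorem det_eq_sq_norm_sub_sq_norm (T : ℂ →ₗ[ℝ] ℂ) (a b : ℂ)
    (hT : ∀ z, T z = a * z + b * conj z) :
    LinearMap.det T = ‖a‖ ^ 2 - ‖b‖ ^ 2 := by
  have h1 : T 1 = a + b := by simp [hT]
  have hI : T I = (a - b) * I := by rw [hT, conj_I]; ring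
  rw [← LinearMap.det_toMatrix basisOneI, Matrix.det_fin_two, Complex.sq_norm, Complex.sq_norm]
  simp only [LinearMap.toMatrix_apply, coe_basisOneI, coe_basisOneI_repr, Matrix.cons_val_zero,
    Matrix.cons_val_one, Matrix.cons_val_fin_one, h1, hI]
  simp only [normSq_apply, add_re, add_im, sub_re, sub_im, mul_re, mul_im, I_re, I_im]
  ring

theorem sq_norm_mul_add_mul_conj (a b z : ℂ) :
    ‖a * z + b * conj z‖ ^ 2 =
      (‖a‖ ^ 2 + ‖b‖ ^ 2) * ‖z‖ ^ 2 + (conj (2 * conj a * b) * z ^ 2).re := by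
  simp only [Complex.sq_norm, normSq_apply]
  simp only [add_re, add_im, mul_re, mul_im, conj_re, conj_im, map_mul, re_ofNat, im_ofNat, pow_two]
  ring

theorem Omega_two_mul_div_one_add_sq_norm {ν : ℂ} (hν : ‖ν‖ ≤ 1) :
    Omega (2 * ν / ((1 + ‖ν‖ ^ 2 : ℝ) : ℂ)) = ν := by
  set r := ‖ν‖
  have hs : 0 < 1 + r ^ 2 := by positivity
  have hnorm : ‖2 * ν / ((1 + r ^ 2 : ℝ) : ℂ)‖ = 2 * r / (1 + r ^ 2) := by
    rw [norm_div, norm_mul, norm_real, Real.norm_of_nonneg hs.le, RCLike.norm_ofNat]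
  have hsqrt : √(1 - (2 * r / (1 + r ^ 2)) ^ 2) = (1 - r ^ 2) / (1 + r ^ 2) := by
    have hr : 0 ≤ 1 - r ^ 2 := by nlinarith [norm_nonneg ν]
    rw [← Real.sqrt_sq (div_nonneg hr hs.le)]
    congr 1
    field_simp
    ring
  rw [Omega, hnorm, hsqrt]
  have : (1 + r ^ 2 : ℂ) ≠ 0 := by exact_mod_cast hs.ne'
  push_cast
  field_simp
  ring

theorem two_mul_conj_mul_div_eq_two_mul_div (a b : ℂ) (ha : a ≠ 0) :
    2 * conj a * b / ((‖a‖ ^ 2 + ‖b‖ ^ 2 : ℝ) : ℂ) = 2 * (b / a) / ((1 + ‖b / a‖ ^ 2 : ℝ) : ℂ) := by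
  have haa : ((‖a‖ ^ 2 : ℝ) : ℂ) = conj a * a := by
    rw [mul_comm, mul_conj, normSq_eq_norm_sq]
  have hca : conj a ≠ 0 := (map_ne_zero _).mpr ha
  rw [norm_div, div_pow, ofReal_add, ofReal_add, ofReal_one, ofReal_div, haa]
  field_simp

/-- The Poincaré conformal dilatation of an orientation-preserving invertible
real-linear map `T : ℂ → ℂ` — the image under the Klein-to-Poincaré isomorphism `Ω`
of the Klein invariant of the pull-back form `T* n`, `n(z) = |z|²` — equals the
classical complex dilatation `μ_T = T_z̄/T_z`. -/
theorem poincare_dilatation_eq_classical (T : ℂ →ₗ[ℝ] ℂ) (hdet : 0 < LinearMap.det T)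
    (Tz Tzb : ℂ)
    (hTz : Tz = (T 1 - Complex.I * T Complex.I) / 2)
    (hTzb : Tzb = (T 1 + Complex.I * T Complex.I) / 2)
    (t : ℝ) (w : ℂ)
    (ht : t = ‖Tz‖ ^ 2 + ‖Tzb‖ ^ 2)
    (hw : w = 2 * (starRingEnd ℂ) Tz * Tzb) :
    ‖Tzb‖ < ‖Tz‖ ∧
    (∀ z : ℂ, ‖T z‖ ^ 2 = t * ‖z‖ ^ 2 + ((starRingEnd ℂ) w * z ^ 2).re) ∧
    Omega (w / (t : ℂ)) = Tzb / Tz := by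
  have hT : ∀ z, T z = Tz * z + Tzb * conj z := hTz ▸ hTzb ▸ apply_eq_wirtingerZ_mul_add T
  have hlt : ‖Tzb‖ < ‖Tz‖ := by
    have := det_eq_sq_norm_sub_sq_norm T Tz Tzb hT
    exact lt_of_pow_lt_pow_left₀ 2 (norm_nonneg _) (by linarith)
  have hTz0 : Tz ≠ 0 := norm_pos_iff.mp ((norm_nonneg _).trans_lt hlt)
  refine ⟨hlt, fun z => ?_, ?_⟩
  · rw [hT, sq_norm_mul_add_mul_conj, ht, hw]
  · rw [hw, ht, two_mul_conj_mul_div_eq_two_mul_div Tz Tzb hTz0]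
    refine Omega_two_mul_div_one_add_sq_norm ?_
    rw [norm_div]
    exact div_le_one_of_le₀ hlt.le (norm_nonneg _)
end

section
/- Let u, T : ℂ → ℂ be real-linear maps, each with positive determinant. Then the composition T ∘ u has positive determinant, the complex number u_z + conj(u_z̄)·μ_T is nonzero, and μ_{T∘u} = (u_z̄ + conj(u_z)·μ_T)/(u_z + conj(u_z̄)·μ_T). In particular, the complex dilatation of T ∘ u is obtained from the complex dilatation of T by applying a map u* of the unit disc depending only on u, so that μ_{T∘u} = u*(μ_T). -/
/-!
Every real-linear `T` is `w ↦ T_z w + T_z̄ w̄`, and `|T_z|² - |T_z̄|² = det T`. Substituting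
`u w = u_z w + u_z̄ w̄` into `T` gives `(T∘u)_z = T_z u_z + T_z̄ conj(u_z̄)` and
`(T∘u)_z̄ = T_z u_z̄ + T_z̄ conj(u_z)`; factoring out `T_z` leaves `μ_T`, and the denominator
cannot vanish because `|conj(u_z̄) μ_T| ≤ |u_z̄| < |u_z|`.
-/

open Complex ComplexConjugate

namespace LinearMap

/-- The coefficient `T_z`, so that `T w = T_z w + T_z̄ w̄`. -/
noncomputable def partialZ (T : ℂ →ₗ[ℝ] ℂ) : ℂ := (T 1 - I * T I) / 2

noncomputable def partialZbar (T : ℂ →ₗ[ℝ] ℂ) : ℂ := (T 1 + I * T I) / 2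

theorem apply_eq_partialZ_mul_add (T : ℂ →ₗ[ℝ] ℂ) (w : ℂ) :
    T w = T.partialZ * w + T.partialZbar * conj w := by
  have hw : w = w.re • (1 : ℂ) + w.im • I := by simp
  have hconj : conj w = (w.re : ℂ) - w.im * I := by simp [Complex.ext_iff]
  conv_lhs => rw [hw, map_add, map_smul, map_smul]
  rw [hconj]
  simp only [partialZ, partialZbar, real_smul]
  linear_combination (w.im * T I : ℂ) * I_sq + (T 1 - I * T I) / 2 * re_add_im w

theorem partialZ_eq_and_partialZbar_eq {T : ℂ →ₗ[ℝ] ℂ} {a b : ℂ}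
    (h : ∀ w, T w = a * w + b * conj w) : T.partialZ = a ∧ T.partialZbar = b := by
  simp only [partialZ, partialZbar, h 1, h I, map_one, conj_I]
  constructor
  · linear_combination (b - a) / 2 * I_sq
  · linear_combination (a - b) / 2 * I_sq

theorem comp_apply_eq_partialZ_mul_add (T u : ℂ →ₗ[ℝ] ℂ) (w : ℂ) :
    T.comp u w = (T.partialZ * u.partialZ + T.partialZbar * conj u.partialZbar) * w
      + (T.partialZ * u.partialZbar + T.partialZbar * conj u.partialZ) * conj w := by
  rw [comp_apply, apply_eq_partialZ_mul_add T, apply_eq_partialZ_mul_add u]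
  simp only [map_add, map_mul, conj_conj]
  ring

theorem partialZ_comp (T u : ℂ →ₗ[ℝ] ℂ) :
    (T.comp u).partialZ = T.partialZ * u.partialZ + T.partialZbar * conj u.partialZbar :=
  (partialZ_eq_and_partialZbar_eq (comp_apply_eq_partialZ_mul_add T u)).1

theorem partialZbar_comp (T u : ℂ →ₗ[ℝ] ℂ) :
    (T.comp u).partialZbar = T.partialZ * u.partialZbar + T.partialZbar * conj u.partialZ :=
  (partialZ_eq_and_partialZbar_eq (comp_apply_eq_partialZ_mul_add T u)).2

theorem det_eq_re_mul_im_sub (T : ℂ →ₗ[ℝ] ℂ) :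
    LinearMap.det T = (T 1).re * (T I).im - (T 1).im * (T I).re := by
  rw [← LinearMap.det_toMatrix basisOneI, Matrix.det_fin_two]
  simp [LinearMap.toMatrix_apply]
  ring

theorem normSq_partialZ_sub_normSq_partialZbar (T : ℂ →ₗ[ℝ] ℂ) :
    normSq T.partialZ - normSq T.partialZbar = LinearMap.det T := by
  rw [det_eq_re_mul_im_sub]
  simp [partialZ, partialZbar, normSq_apply]
  ring

theorem norm_partialZbar_lt_norm_partialZ {T : ℂ →ₗ[ℝ] ℂ} (hT : 0 < LinearMap.det T) :
    ‖T.partialZbar‖ < ‖T.partialZ‖ := by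
  have h := normSq_partialZ_sub_normSq_partialZbar T
  rw [← sq_lt_sq₀ (norm_nonneg _) (norm_nonneg _), ← normSq_eq_norm_sq, ← normSq_eq_norm_sq]
  linarith

theorem partialZ_ne_zero {T : ℂ →ₗ[ℝ] ℂ} (hT : 0 < LinearMap.det T) : T.partialZ ≠ 0 :=
  norm_pos_iff.mp ((norm_nonneg _).trans_lt (norm_partialZbar_lt_norm_partialZ hT))

theorem norm_partialZbar_div_partialZ_lt_one {T : ℂ →ₗ[ℝ] ℂ} (hT : 0 < LinearMap.det T) :
    ‖T.partialZbar / T.partialZ‖ < 1 := by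
  rw [norm_div, div_lt_one (norm_pos_iff.mpr (partialZ_ne_zero hT))]
  exact norm_partialZbar_lt_norm_partialZ hT

end LinearMap

theorem add_mul_ne_zero_of_norm_lt {𝕜 : Type*} [NormedField 𝕜] {a b μ : 𝕜}
    (hab : ‖b‖ < ‖a‖) (hμ : ‖μ‖ ≤ 1) : a + b * μ ≠ 0 := by
  intro h
  have hbμ : ‖b * μ‖ < ‖a‖ := by
    rw [norm_mul]
    exact (mul_le_of_le_one_right (norm_nonneg b) hμ).trans_lt hab
  rw [eq_neg_of_add_eq_zero_right h, norm_neg] at hbμ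
  exact hbμ.false

/-- The action of an orientation-preserving invertible real-linear map `u : ℂ → ℂ`
on complex dilatations: `μ_{T∘u} = (u_z̄ + conj(u_z)·μ_T)/(u_z + conj(u_z̄)·μ_T)`,
i.e. `μ_{T∘u} = u*(μ_T)` for a map `u*` of the unit disc depending only on `u`. -/
theorem dilatation_of_composition (u T : ℂ →ₗ[ℝ] ℂ)
    (hu : 0 < LinearMap.det u) (hT : 0 < LinearMap.det T)
    (uz uzb Tz Tzb Cz Czb : ℂ)
    (huz : uz = (u 1 - Complex.I * u Complex.I) / 2)
    (huzb : uzb = (u 1 + Complex.I * u Complex.I) / 2)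
    (hTz : Tz = (T 1 - Complex.I * T Complex.I) / 2)
    (hTzb : Tzb = (T 1 + Complex.I * T Complex.I) / 2)
    (hCz : Cz = ((T.comp u) 1 - Complex.I * (T.comp u) Complex.I) / 2)
    (hCzb : Czb = ((T.comp u) 1 + Complex.I * (T.comp u) Complex.I) / 2) :
    0 < LinearMap.det (T.comp u) ∧
    uz + (starRingEnd ℂ) uzb * (Tzb / Tz) ≠ 0 ∧
    Czb / Cz = (uzb + (starRingEnd ℂ) uz * (Tzb / Tz))
      / (uz + (starRingEnd ℂ) uzb * (Tzb / Tz)) := by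
  change uz = u.partialZ at huz
  change uzb = u.partialZbar at huzb
  change Tz = T.partialZ at hTz
  change Tzb = T.partialZbar at hTzb
  change Cz = (T.comp u).partialZ at hCz
  change Czb = (T.comp u).partialZbar at hCzb
  subst huz huzb hTz hTzb hCz hCzb
  refine ⟨by rw [LinearMap.det_comp]; exact mul_pos hT hu, ?_, ?_⟩
  · refine add_mul_ne_zero_of_norm_lt ?_ (LinearMap.norm_partialZbar_div_partialZ_lt_one hT).le
    rw [norm_conj]
    exact LinearMap.norm_partialZbar_lt_norm_partialZ hu
  · have hTz : T.partialZ ≠ 0 := LinearMap.partialZ_ne_zero hT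
    have factor (a b : ℂ) : T.partialZ * a + T.partialZbar * b
        = T.partialZ * (a + b * (T.partialZbar / T.partialZ)) := by
      field_simp
    rw [LinearMap.partialZ_comp, LinearMap.partialZbar_comp, factor, factor,
      mul_div_mul_left _ _ hTz]
end

section
/- Let V and W be complex vector spaces of complex dimension 1, T : V → W a bijective real-linear map, w ∈ W nonzero, and x, y ∈ V nonzero. For a nonzero vector v ∈ V write S_v = f_w ∘ T ∘ f_v⁻¹ : ℂ → ℂ and π_T(v) = μ_{S_v} when (S_v)_z ≠ 0. Then for all nonzero u, v ∈ V with (S_u)_z ≠ 0, one has (S_v)_z ≠ 0 and π_T(v)·conj(f_v(x))·(f_v(y))⁻¹ = π_T(u)·conj(f_u(x))·(f_u(y))⁻¹. (This scalar invariance expresses that the tensor π_T(v)·(v• ⊗ v) ∈ conj(V)* ⊗ V, where v• is the basis of conj(V)* dual to v defined by v•(x) = conj(f_v(x)), does not depend on the choice of the nonzero vector v ∈ V.) -/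
/-!
Two coordinates of the line `V` differ by a scalar: `f_v = c • f_u` with `c = f_v (f_u⁻¹ 1)`,
so `S_v = S_u ∘ (c⁻¹ • ·)`, where `S_v = coordinateRep fw T f_v`. Precomposing a real-linear
`S : ℂ → ℂ` with multiplication by `a` multiplies `S_z` by `a` and `S_z̄` by `conj a`; hence
`π_T(v) = (c / conj c) • π_T(u)`, and this factor is cancelled by
`conj (f_v x) / f_v y = (conj c / c) • conj (f_u x) / f_u y`.
-/

open Complex ComplexConjugate

namespace LinearMap

noncomputable def wirtingerZ (S : ℂ →ₗ[ℝ] ℂ) : ℂ := (S 1 - I * S I) / 2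

noncomputable def wirtingerZbar (S : ℂ →ₗ[ℝ] ℂ) : ℂ := (S 1 + I * S I) / 2

theorem apply_eq_re_mul_add_im_mul (S : ℂ →ₗ[ℝ] ℂ) (z : ℂ) :
    S z = z.re * S 1 + z.im * S I :=
  calc S z = S (z.re • 1 + z.im • I) := by rw [real_smul, real_smul, mul_one, re_add_im]
    _ = z.re * S 1 + z.im * S I := by rw [map_add, map_smul, map_smul, real_smul, real_smul]

theorem wirtingerZ_comp_mulLeft (S : ℂ →ₗ[ℝ] ℂ) (a : ℂ) :
    wirtingerZ (S ∘ₗ mulLeft ℝ a) = a * wirtingerZ S := by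
  simp only [wirtingerZ, comp_apply, mulLeft_apply, mul_one]
  rw [S.apply_eq_re_mul_add_im_mul a, S.apply_eq_re_mul_add_im_mul (a * I)]
  conv_rhs => rw [← re_add_im a]
  simp only [mul_I_re, mul_I_im, ofReal_neg]
  linear_combination (a.im * S I / 2) * I_sq

theorem wirtingerZbar_comp_mulLeft (S : ℂ →ₗ[ℝ] ℂ) (a : ℂ) :
    wirtingerZbar (S ∘ₗ mulLeft ℝ a) = conj a * wirtingerZbar S := by
  simp only [wirtingerZbar, comp_apply, mulLeft_apply, mul_one]
  rw [S.apply_eq_re_mul_add_im_mul a, S.apply_eq_re_mul_add_im_mul (a * I)]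
  conv_rhs => rw [← re_add_im a]
  simp only [mul_I_re, mul_I_im, ofReal_neg, map_add, map_mul, conj_ofReal, conj_I]
  linear_combination (a.im * S I / 2) * I_sq

end LinearMap

namespace LinearEquiv

variable {K V : Type*} [AddCommGroup V]

theorem apply_eq_mul_apply_symm_one [CommSemiring K] [Module K V] (f g : V ≃ₗ[K] K) (z : V) :
    g z = f z * g (f.symm 1) :=
  calc g z = g (f z • f.symm 1) := by rw [← map_smul, smul_eq_mul, mul_one, symm_apply_apply]
    _ = f z * g (f.symm 1) := map_smul g _ _

theorem apply_symm_one_ne_zero [Semiring K] [Nontrivial K] [Module K V] (f g : V ≃ₗ[K] K) :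
    g (f.symm 1) ≠ 0 := by
  simp

theorem symm_apply_eq_symm_apply_inv_mul [Field K] [Module K V] (f g : V ≃ₗ[K] K) (z : K) :
    g.symm z = f.symm ((g (f.symm 1))⁻¹ * z) := by
  have := apply_symm_one_ne_zero f g
  rw [g.symm_apply_eq, apply_eq_mul_apply_symm_one f g, f.apply_symm_apply]
  field_simp

end LinearEquiv

section Coordinates

variable {V W : Type*} [AddCommGroup V] [Module ℝ V] [Module ℂ V] [IsScalarTower ℝ ℂ V]
  [AddCommGroup W] [Module ℝ W] [Module ℂ W] [IsScalarTower ℝ ℂ W]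

noncomputable def coordinateRep (fw : W →ₗ[ℂ] ℂ) (T : V →ₗ[ℝ] W) (f : V ≃ₗ[ℂ] ℂ) :
    ℂ →ₗ[ℝ] ℂ :=
  fw.restrictScalars ℝ ∘ₗ T ∘ₗ f.symm.toLinearMap.restrictScalars ℝ

theorem coordinateRep_eq_comp_mulLeft (fw : W →ₗ[ℂ] ℂ) (T : V →ₗ[ℝ] W) (f g : V ≃ₗ[ℂ] ℂ) :
    coordinateRep fw T g = coordinateRep fw T f ∘ₗ LinearMap.mulLeft ℝ (g (f.symm 1))⁻¹ := by
  ext z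
  simp [coordinateRep, g.symm_apply_eq_symm_apply_inv_mul f]

end Coordinates

theorem dilatation_tensor_well_defined_general
    {V W : Type*} [AddCommGroup V] [Module ℝ V] [Module ℂ V] [IsScalarTower ℝ ℂ V]
    [AddCommGroup W] [Module ℝ W] [Module ℂ W] [IsScalarTower ℝ ℂ W]
    (T : V →ₗ[ℝ] W)
    (x y : V) (hy : y ≠ 0)
    (fu fv : V ≃ₗ[ℂ] ℂ)
    (fw : W →ₗ[ℂ] ℂ)
    (Suz Suzb Svz Svzb : ℂ)
    (hSuz : Suz = (fw (T (fu.symm 1)) - Complex.I * fw (T (fu.symm Complex.I))) / 2)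
    (hSuzb : Suzb = (fw (T (fu.symm 1)) + Complex.I * fw (T (fu.symm Complex.I))) / 2)
    (hSvz : Svz = (fw (T (fv.symm 1)) - Complex.I * fw (T (fv.symm Complex.I))) / 2)
    (hSvzb : Svzb = (fw (T (fv.symm 1)) + Complex.I * fw (T (fv.symm Complex.I))) / 2)
    (hSuz0 : Suz ≠ 0) :
    Svz ≠ 0 ∧
    (Svzb / Svz) * (starRingEnd ℂ) (fv x) * (fv y)⁻¹
      = (Suzb / Suz) * (starRingEnd ℂ) (fu x) * (fu y)⁻¹ := by
  set c := fv (fu.symm 1)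
  have hc : c ≠ 0 := LinearEquiv.apply_symm_one_ne_zero fu fv
  have hS : coordinateRep fw T fv = coordinateRep fw T fu ∘ₗ LinearMap.mulLeft ℝ c⁻¹ :=
    coordinateRep_eq_comp_mulLeft fw T fu fv
  have hz : Svz = c⁻¹ * Suz := by
    rw [hSvz, hSuz]
    exact (congrArg LinearMap.wirtingerZ hS).trans (LinearMap.wirtingerZ_comp_mulLeft _ _)
  have hzb : Svzb = conj c⁻¹ * Suzb := by
    rw [hSvzb, hSuzb]
    exact (congrArg LinearMap.wirtingerZbar hS).trans (LinearMap.wirtingerZbar_comp_mulLeft _ _)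
  have hfv : ∀ z, fv z = fu z * c := LinearEquiv.apply_eq_mul_apply_symm_one fu fv
  have hfy : fu y ≠ 0 := by simpa using hy
  have hcc : conj c ≠ 0 := by simpa using hc
  refine ⟨hz ▸ mul_ne_zero (inv_ne_zero hc) hSuz0, ?_⟩
  rw [hz, hzb, hfv x, hfv y, map_mul, map_inv₀]
  field_simp

/-- For a bijective real-linear map `T : V → W` between 1-dimensional complex vector
spaces, the scalar `π_T(v)·conj(f_v(x))·(f_v(y))⁻¹` does not depend on the choice of
the nonzero vector `v ∈ V`: the tensor `π_T(v)·(v• ⊗ v) ∈ conj(V)* ⊗ V` is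
well-defined. -/
theorem dilatation_tensor_well_defined
    {V W : Type*} [AddCommGroup V] [Module ℝ V] [Module ℂ V] [IsScalarTower ℝ ℂ V]
    [AddCommGroup W] [Module ℝ W] [Module ℂ W] [IsScalarTower ℝ ℂ W]
    (hdV : Module.finrank ℂ V = 1) (hdW : Module.finrank ℂ W = 1)
    (T : V →ₗ[ℝ] W) (hT : Function.Bijective T)
    (u v : V) (hu : u ≠ 0) (hv : v ≠ 0)
    (x y : V) (hx : x ≠ 0) (hy : y ≠ 0)
    (w : W) (hw : w ≠ 0)
    (fu fv : V ≃ₗ[ℂ] ℂ) (hfu : fu u = 1) (hfv : fv v = 1)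
    (fw : W →ₗ[ℂ] ℂ) (hfw : fw w = 1)
    (Suz Suzb Svz Svzb : ℂ)
    (hSuz : Suz = (fw (T (fu.symm 1)) - Complex.I * fw (T (fu.symm Complex.I))) / 2)
    (hSuzb : Suzb = (fw (T (fu.symm 1)) + Complex.I * fw (T (fu.symm Complex.I))) / 2)
    (hSvz : Svz = (fw (T (fv.symm 1)) - Complex.I * fw (T (fv.symm Complex.I))) / 2)
    (hSvzb : Svzb = (fw (T (fv.symm 1)) + Complex.I * fw (T (fv.symm Complex.I))) / 2)
    (hSuz0 : Suz ≠ 0) :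
    Svz ≠ 0 ∧
    (Svzb / Svz) * (starRingEnd ℂ) (fv x) * (fv y)⁻¹
      = (Suzb / Suz) * (starRingEnd ℂ) (fu x) * (fu y)⁻¹ :=
  dilatation_tensor_well_defined_general T x y hy fu fv fw Suz Suzb Svz Svzb hSuz hSuzb hSvz hSvzb
    hSuz0
end
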